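/- If X is a fuzzy tree whose underlying graph is not a tree, then there exists at least one edge uv such that SDI(X \ uv) = SDI(X). -/

import Mathlib

open Finset

/-- A fuzzy graph on vertex type `V`. -/
structure FuzzyGraph (V : Type*) where
  ρ : V → ℝ
  υ : V → V → ℝ
  ρ_nonneg : ∀ a, 0 ≤ ρ a
  ρ_le_one : ∀ a, ρ a ≤ 1
  υ_nonneg : ∀ a b, 0 ≤ υ a b
  symm : ∀ a b, υ a b = υ b a
  υ_le : ∀ a b, υ a b ≤ min (ρ a) (ρ b)
  loopless : ∀ a, υ a a = 0

namespace FuzzyGraph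

variable {V : Type*} [Fintype V] [DecidableEq V]

/-- Strength of a path given by its list of successive vertices:
the minimum of the weights of its edges. -/
def pathStrength (X : FuzzyGraph V) : List V → ℝ
  | [] => 0
  | [_] => 0
  | [a, b] => X.υ a b
  | a :: b :: c :: l => min (X.υ a b) (X.pathStrength (b :: c :: l))

/-- `l` is a path from `a` to `b` : distinct vertices joined by positive-weight edges. -/
def IsPath (X : FuzzyGraph V) (a b : V) (l : List V) : Prop :=
  l.Nodup ∧ l.head? = some a ∧ l.getLast? = some b ∧ 2 ≤ l.length ∧
    l.Chain' (fun x y => 0 < X.υ x y)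

/-- Strength of connectedness between two vertices: maximum strength of a path. -/
noncomputable def conn (X : FuzzyGraph V) (a b : V) : ℝ :=
  sSup {s | ∃ l : List V, X.IsPath a b l ∧ s = X.pathStrength l}

/-- Delete the edge `ab` (set its weight to `0`). -/
def deleteEdge (X : FuzzyGraph V) (a b : V) : FuzzyGraph V where
  ρ := X.ρ
  υ x y := if (x = a ∧ y = b) ∨ (x = b ∧ y = a) then 0 else X.υ x y
  ρ_nonneg := X.ρ_nonneg
  ρ_le_one := X.ρ_le_one
  υ_nonneg := by
    intro x y; split_ifs
    · exact le_rfl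
    · exact X.υ_nonneg x y
  symm := by
    intro x y
    by_cases h : (x = a ∧ y = b) ∨ (x = b ∧ y = a)
    · rw [if_pos h, if_pos (by tauto)]
    · rw [if_neg h, if_neg (by tauto), X.symm]
  υ_le := by
    intro x y; split_ifs
    · exact le_min (X.ρ_nonneg x) (X.ρ_nonneg y)
    · exact X.υ_le x y
  loopless := by
    intro x; split_ifs
    · rfl
    · exact X.loopless x

/-- `ab` is a strong edge (α- or β-strong). -/
def StrongEdge (X : FuzzyGraph V) (a b : V) : Prop :=
  0 < X.υ a b ∧ (X.deleteEdge a b).conn a b ≤ X.υ a b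

/-- `ab` is an α-strong edge. -/
def AlphaStrong (X : FuzzyGraph V) (a b : V) : Prop :=
  0 < X.υ a b ∧ (X.deleteEdge a b).conn a b < X.υ a b

/-- `ab` is a β-strong edge. -/
def BetaStrong (X : FuzzyGraph V) (a b : V) : Prop :=
  0 < X.υ a b ∧ X.υ a b = (X.deleteEdge a b).conn a b

/-- `ab` is a δ-edge. -/
def DeltaEdge (X : FuzzyGraph V) (a b : V) : Prop :=
  0 < X.υ a b ∧ X.υ a b < (X.deleteEdge a b).conn a b

/-- The minimum weight of a strong edge incident at `a`. -/
noncomputable def minInc (X : FuzzyGraph V) (a : V) : ℝ :=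
  sInf {w | ∃ b, X.StrongEdge a b ∧ w = X.υ a b}

/-- The weight of a set of vertices. -/
noncomputable def weight (X : FuzzyGraph V) (S : Finset V) : ℝ :=
  ∑ a ∈ S, X.minInc a

/-- `D` is a strong dominating set. -/
def IsSDS (X : FuzzyGraph V) (D : Finset V) : Prop :=
  ∀ v, v ∉ D → ∃ a ∈ D, X.StrongEdge a v

/-- `D` is a minimal strong dominating set. -/
def IsMinimalSDS (X : FuzzyGraph V) (D : Finset V) : Prop :=
  X.IsSDS D ∧ ∀ a ∈ D, ¬ X.IsSDS (D.erase a)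

/-- `D` is a minimum (least weight) strong dominating set. -/
def IsMinimumSDS (X : FuzzyGraph V) (D : Finset V) : Prop :=
  X.IsSDS D ∧ ∀ D' : Finset V, X.IsSDS D' → X.weight D ≤ X.weight D'

/-- The strong domination degree of a vertex. -/
noncomputable def sd (X : FuzzyGraph V) (u : V) : ℝ :=
  sInf {w | ∃ D : Finset V, X.IsMinimalSDS D ∧ u ∈ D ∧ w = X.weight D}

/-- The strong domination number. -/
noncomputable def gammaS (X : FuzzyGraph V) : ℝ :=
  sInf {w | ∃ D : Finset V, X.IsSDS D ∧ w = X.weight D}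

/-- The upper strong domination number. -/
noncomputable def GammaS (X : FuzzyGraph V) : ℝ :=
  sSup {w | ∃ D : Finset V, X.IsMinimalSDS D ∧ w = X.weight D}

/-- The strong domination index. -/
noncomputable def SDI (X : FuzzyGraph V) : ℝ := ∑ u : V, X.sd u

/-- `X` is connected. -/
def Connected (X : FuzzyGraph V) : Prop := ∀ a b : V, a ≠ b → ∃ l, X.IsPath a b l

/-- `X` is a strong fuzzy graph: every edge is strong. -/
def IsStrongFG (X : FuzzyGraph V) : Prop := ∀ a b, 0 < X.υ a b → X.StrongEdge a b

/-- Underlying (support) simple graph. -/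
def support (X : FuzzyGraph V) : SimpleGraph V where
  Adj a b := 0 < X.υ a b
  symm := by constructor; intro a b h; rw [X.symm]; exact h
  loopless := by constructor; intro a h; rw [X.loopless] at h; exact lt_irrefl 0 h

/-- `X` is a fuzzy tree. -/
def IsFuzzyTree (X : FuzzyGraph V) : Prop :=
  ∃ F : FuzzyGraph V, F.ρ = X.ρ ∧ (∀ a b, F.υ a b = X.υ a b ∨ F.υ a b = 0) ∧
    F.support.IsTree ∧ ∀ a b, 0 < X.υ a b → F.υ a b = 0 → X.υ a b < F.conn a b

/-- The size of a fuzzy graph: the sum of all edge weights. -/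
noncomputable def size (X : FuzzyGraph V) : ℝ := (∑ a : V, ∑ b : V, X.υ a b) / 2

/-- The underlying graph of `X` is a cycle. -/
def IsCycleGraph (X : FuzzyGraph V) : Prop :=
  ∃ n : ℕ, 3 ≤ n ∧ ∃ f : ZMod n ≃ V,
    ∀ x y : V, 0 < X.υ x y ↔ ∃ i : ZMod n, (x = f i ∧ y = f (i + 1)) ∨ (x = f (i + 1) ∧ y = f i)

/-- `X` is a fuzzy cycle: a cycle with at least two edges of minimum weight. -/
def IsFuzzyCycle (X : FuzzyGraph V) : Prop :=
  X.IsCycleGraph ∧ ∃ a b c d : V, 0 < X.υ a b ∧ 0 < X.υ c d ∧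
    Sym2.mk (a, b) ≠ Sym2.mk (c, d) ∧ X.υ a b = X.υ c d ∧
    ∀ x y, 0 < X.υ x y → X.υ a b ≤ X.υ x y

/-- A set of pairwise fuzzy independent vertices. -/
def IsFuzzyIndep (X : FuzzyGraph V) (S : Finset V) : Prop :=
  ∀ a ∈ S, ∀ b ∈ S, a ≠ b → ¬ X.StrongEdge a b

/-- The strong independent domination number. -/
noncomputable def iS (X : FuzzyGraph V) : ℝ :=
  sInf {w | ∃ D : Finset V, X.IsSDS D ∧ X.IsFuzzyIndep D ∧ w = X.weight D}

/-- The strong independence number. -/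
noncomputable def betaS (X : FuzzyGraph V) : ℝ :=
  sSup {w | ∃ S : Finset V, X.IsFuzzyIndep S ∧ w = X.weight S}

/-- Closed strong neighborhood. -/
def closedNbhd (X : FuzzyGraph V) (a : V) : Set V := insert a {b | X.StrongEdge a b}

/-- Open strong neighborhood. -/
def openNbhd (X : FuzzyGraph V) (a : V) : Set V := {b | X.StrongEdge a b}

/-- Private neighborhood of `a` with respect to `S`. -/
def privNbhd (X : FuzzyGraph V) (a : V) (S : Finset V) : Set V :=
  X.closedNbhd a \ ⋃ b ∈ S.erase a, X.closedNbhd b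

/-- `S` is a fuzzy irredundant set. -/
def IsIrredundant (X : FuzzyGraph V) (S : Finset V) : Prop :=
  ∀ a ∈ S, (X.privNbhd a S).Nonempty

/-- `S` is a maximal fuzzy irredundant set. -/
def IsMaximalIrredundant (X : FuzzyGraph V) (S : Finset V) : Prop :=
  X.IsIrredundant S ∧ ∀ v ∉ S, ¬ X.IsIrredundant (insert v S)

/-- The strong irredundance number. -/
noncomputable def irS (X : FuzzyGraph V) : ℝ :=
  sInf {w | ∃ S : Finset V, X.IsMaximalIrredundant S ∧ w = X.weight S}

end FuzzyGraph

/-!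
An edge `ab` of `X` outside the spanning tree `F` of the fuzzy-tree definition is a δ-edge:
`F` already joins `a` and `b` more strongly than `υ(ab)`, and `F` is a subgraph of `X - ab`.
Deleting a δ-edge changes neither which edges are strong nor their weights, and the strong
domination index only sees strong edges and their weights.

Strength of connectedness is compared through cuts: for `s > 0`, `s ≤ CONN(a, b)` iff `a ≠ b`
and `a`, `b` are joined by edges of weight at least `s`.
-/

theorem SimpleGraph.Reachable.deleteEdges_of_not_isBridge {V : Type*} {G : SimpleGraph V}
    {a b u v : V} (h : G.Adj a b → ¬ G.IsBridge s(a, b)) (huv : G.Reachable u v) :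
    (G.deleteEdges {s(a, b)}).Reachable u v := by
  obtain ⟨p⟩ := huv
  induction p with
  | nil => rfl
  | @cons u w v hadj _ ih =>
    refine Reachable.trans ?_ ih
    by_cases he : s(u, w) = s(a, b)
    · rcases Sym2.eq_iff.1 he with ⟨rfl, rfl⟩ | ⟨rfl, rfl⟩
      · exact not_not.1 (h hadj)
      · exact (not_not.1 (h hadj.symm)).symm
    · exact Adj.reachable (deleteEdges_adj.2 ⟨hadj, he⟩)

namespace FuzzyGraph

variable {V : Type*}

section Connectedness

variable (X : FuzzyGraph V)

/-- The `s`-cut of `X`; the conjunct `0 < υ u v` only matters when `s ≤ 0`. -/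
def cut (s : ℝ) : SimpleGraph V where
  Adj u v := s ≤ X.υ u v ∧ 0 < X.υ u v
  symm := ⟨fun u v h => by rwa [X.symm v u]⟩
  loopless := ⟨fun u h => by simp [X.loopless] at h⟩

lemma cut_le_support (s : ℝ) : X.cut s ≤ X.support := fun _ _ h => h.2

lemma cut_mono {Y : FuzzyGraph V} (h : ∀ u v, X.υ u v ≤ Y.υ u v) (s : ℝ) : X.cut s ≤ Y.cut s := by
  intro u v huv
  exact ⟨huv.1.trans (h u v), huv.2.trans_le (h u v)⟩

lemma pathStrength_nonneg : ∀ l : List V, 0 ≤ X.pathStrength l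
  | [] | [_] => le_rfl
  | [a, b] => X.υ_nonneg a b
  | a :: b :: c :: l => le_min (X.υ_nonneg a b) (pathStrength_nonneg (b :: c :: l))

lemma le_pathStrength_iff {s : ℝ} : ∀ {l : List V}, 2 ≤ l.length →
    (s ≤ X.pathStrength l ↔ l.IsChain fun u v => s ≤ X.υ u v)
  | [a, b], _ => by simp [pathStrength]
  | a :: b :: c :: l, _ => by
    simp only [pathStrength, le_min_iff, List.isChain_cons_cons,
      le_pathStrength_iff (l := b :: c :: l) (by simp)]

lemma conn_nonneg (a b : V) : 0 ≤ X.conn a b :=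
  Real.sSup_nonneg (by rintro s ⟨l, -, rfl⟩; exact X.pathStrength_nonneg l)

lemma IsPath.ne {X : FuzzyGraph V} {a b : V} {l : List V} (hl : X.IsPath a b l) : a ≠ b := by
  obtain ⟨hnd, hhead, hlast, hlen, -⟩ := hl
  match l, hnd, hhead, hlast, hlen with
  | c :: d :: t, hnd, hhead, hlast, _ =>
    rintro rfl
    obtain rfl : c = a := by simpa using hhead
    rw [List.getLast?_cons_cons] at hlast
    exact (List.nodup_cons.1 hnd).1 (List.mem_of_getLast? hlast)

lemma isPath_support {G : SimpleGraph V} (hG : G ≤ X.support) {a b : V} {p : G.Walk a b}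
    (hp : p.IsPath) (hab : a ≠ b) : X.IsPath a b p.support := by
  refine ⟨hp.support_nodup, ?_, ?_, ?_, p.isChain_adj_support.imp fun _ _ h => hG h⟩
  · rw [List.head?_eq_some_head p.support_ne_nil, p.head_support]
  · rw [List.getLast?_eq_some_getLast p.support_ne_nil, p.getLast_support]
  · have : p.length ≠ 0 := fun h => hab (SimpleGraph.Walk.eq_of_length_eq_zero h)
    rw [p.length_support]
    omega

section DeleteEdge

variable [DecidableEq V]

lemma deleteEdge_υ (a b u v : V) :
    (X.deleteEdge a b).υ u v = if s(u, v) = s(a, b) then 0 else X.υ u v := by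
  simp only [deleteEdge, Sym2.eq_iff]

lemma deleteEdge_υ_of_ne {a b u v : V} (h : s(u, v) ≠ s(a, b)) :
    (X.deleteEdge a b).υ u v = X.υ u v := by
  rw [deleteEdge_υ, if_neg h]

lemma deleteEdge_υ_le (a b u v : V) : (X.deleteEdge a b).υ u v ≤ X.υ u v := by
  rw [deleteEdge_υ]
  split_ifs
  exacts [X.υ_nonneg u v, le_rfl]

lemma deleteEdge_υ_mono {Y : FuzzyGraph V} (h : ∀ u v, Y.υ u v ≤ X.υ u v) (a b u v : V) :
    (Y.deleteEdge a b).υ u v ≤ (X.deleteEdge a b).υ u v := by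
  rw [deleteEdge_υ, deleteEdge_υ]
  split_ifs
  exacts [le_rfl, h u v]

lemma deleteEdge_comm (a b : V) : X.deleteEdge a b = X.deleteEdge b a := by
  have h : (X.deleteEdge a b).υ = (X.deleteEdge b a).υ := by
    funext u v
    rw [deleteEdge_υ, deleteEdge_υ, Sym2.eq_swap (a := a)]
  unfold deleteEdge at h ⊢
  congr

lemma cut_deleteEdge (a b : V) (s : ℝ) :
    (X.deleteEdge a b).cut s = (X.cut s).deleteEdges {s(a, b)} := by
  ext u v
  simp only [cut, SimpleGraph.deleteEdges_adj, Set.mem_singleton_iff, deleteEdge_υ]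
  split_ifs <;> simp [*]

lemma cut_le_cut_deleteEdge {a b : V} {s t : ℝ} (hst : s ≤ t) (hab : X.υ a b < t) :
    X.cut t ≤ (X.deleteEdge a b).cut s := by
  intro u v huv
  rw [cut_deleteEdge]
  refine SimpleGraph.deleteEdges_adj.2 ⟨⟨hst.trans huv.1, huv.2⟩, fun he => ?_⟩
  rcases Sym2.eq_iff.1 he with ⟨rfl, rfl⟩ | ⟨rfl, rfl⟩
  · exact (hab.trans_le huv.1).false
  · exact (hab.trans_le (X.symm u v ▸ huv.1)).false

end DeleteEdge

section Finite

variable [Fintype V]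

lemma finite_pathStrengths (a b : V) :
    {s | ∃ l, X.IsPath a b l ∧ s = X.pathStrength l}.Finite := by
  refine ((List.finite_length_le V (Fintype.card V)).image X.pathStrength).subset ?_
  rintro s ⟨l, hl, rfl⟩
  exact ⟨l, hl.1.length_le_card, rfl⟩

lemma pathStrength_le_conn {a b : V} {l : List V} (hl : X.IsPath a b l) :
    X.pathStrength l ≤ X.conn a b :=
  le_csSup (X.finite_pathStrengths a b).bddAbove ⟨l, hl, rfl⟩

lemma exists_isPath_pathStrength_eq_conn {a b : V} (h : 0 < X.conn a b) :
    ∃ l, X.IsPath a b l ∧ X.pathStrength l = X.conn a b := by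
  have hne : {s | ∃ l, X.IsPath a b l ∧ s = X.pathStrength l}.Nonempty := by
    by_contra hempty
    rw [Set.not_nonempty_iff_eq_empty] at hempty
    rw [conn, hempty, Real.sSup_empty] at h
    exact h.false
  obtain ⟨l, hl, heq⟩ := hne.csSup_mem (X.finite_pathStrengths a b)
  exact ⟨l, hl, heq.symm⟩

lemma le_conn_iff {s : ℝ} (hs : 0 < s) {a b : V} :
    s ≤ X.conn a b ↔ a ≠ b ∧ (X.cut s).Reachable a b := by
  constructor
  · intro h
    obtain ⟨l, hl, hconn⟩ := X.exists_isPath_pathStrength_eq_conn (hs.trans_le h)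
    have hab := hl.ne
    obtain ⟨-, hhead, hlast, hlen, -⟩ := hl
    have hchain : l.IsChain (X.cut s).Adj :=
      ((X.le_pathStrength_iff hlen).1 (hconn ▸ h)).imp fun _ _ h => ⟨h, hs.trans_le h⟩
    have hne : l ≠ [] := List.ne_nil_of_length_pos (by omega)
    have hrel := List.relationReflTransGen_of_exists_isChain l hchain hne
    rw [(List.head_eq_iff_head?_eq_some hne).2 hhead,
      (List.getLast_eq_iff_getLast?_eq_some hne).2 hlast] at hrel
    exact ⟨hab, (SimpleGraph.reachable_iff_reflTransGen _ _).2 hrel⟩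
  · rintro ⟨hab, hr⟩
    obtain ⟨p, hp⟩ := hr.exists_isPath
    have hl := X.isPath_support (X.cut_le_support s) hp hab
    exact ((X.le_pathStrength_iff hl.2.2.2.1).2 (p.isChain_adj_support.imp fun _ _ h => h.1)).trans
      (X.pathStrength_le_conn hl)

lemma conn_le_conn_of_reachable {Y : FuzzyGraph V} {a b c d : V}
    (hne : a ≠ b → c ≠ d)
    (h : ∀ s, 0 < s → (X.cut s).Reachable a b → (Y.cut s).Reachable c d) :
    X.conn a b ≤ Y.conn c d := by
  rcases le_or_gt (X.conn a b) 0 with h0 | h0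
  · exact h0.trans (Y.conn_nonneg c d)
  · obtain ⟨hab, hr⟩ := (X.le_conn_iff h0).1 le_rfl
    exact (Y.le_conn_iff h0).2 ⟨hne hab, h _ h0 hr⟩

lemma conn_comm (a b : V) : X.conn a b = X.conn b a :=
  le_antisymm (X.conn_le_conn_of_reachable Ne.symm fun _ _ => .symm)
    (X.conn_le_conn_of_reachable Ne.symm fun _ _ => .symm)

lemma conn_mono {Y : FuzzyGraph V} (h : ∀ u v, X.υ u v ≤ Y.υ u v) (a b : V) :
    X.conn a b ≤ Y.conn a b :=
  X.conn_le_conn_of_reachable id fun s _ hr => hr.mono (X.cut_mono h s)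

end Finite

end Connectedness

section StrongEdgeCongr

variable [DecidableEq V] {X Y : FuzzyGraph V}

lemma isSDS_congr (hS : ∀ a b, Y.StrongEdge a b ↔ X.StrongEdge a b) (D : Finset V) :
    Y.IsSDS D ↔ X.IsSDS D := by
  simp only [IsSDS, hS]

lemma isMinimalSDS_congr (hS : ∀ a b, Y.StrongEdge a b ↔ X.StrongEdge a b) (D : Finset V) :
    Y.IsMinimalSDS D ↔ X.IsMinimalSDS D := by
  simp only [IsMinimalSDS, isSDS_congr hS]

lemma minInc_congr (hS : ∀ a b, Y.StrongEdge a b ↔ X.StrongEdge a b)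
    (hυ : ∀ a b, X.StrongEdge a b → Y.υ a b = X.υ a b) (a : V) : Y.minInc a = X.minInc a :=
  congrArg sInf <| Set.ext fun _ => exists_congr fun b => by
    rw [hS]
    exact and_congr_right fun h => by rw [hυ a b h]

lemma sd_congr (hS : ∀ a b, Y.StrongEdge a b ↔ X.StrongEdge a b)
    (hυ : ∀ a b, X.StrongEdge a b → Y.υ a b = X.υ a b) (u : V) : Y.sd u = X.sd u := by
  simp only [sd, weight, isMinimalSDS_congr hS, minInc_congr hS hυ]

lemma SDI_congr [Fintype V] (hS : ∀ a b, Y.StrongEdge a b ↔ X.StrongEdge a b)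
    (hυ : ∀ a b, X.StrongEdge a b → Y.υ a b = X.υ a b) : Y.SDI = X.SDI := by
  simp only [SDI, sd_congr hS hυ]

end StrongEdgeCongr

variable [DecidableEq V] {X : FuzzyGraph V} {a b x y : V}

lemma DeltaEdge.not_strongEdge (h : X.DeltaEdge a b) : ¬ X.StrongEdge a b :=
  fun hs => (h.2.trans_le hs.2).false

lemma strongEdge_iff_not_deltaEdge (h : 0 < X.υ a b) : X.StrongEdge a b ↔ ¬ X.DeltaEdge a b := by
  simp only [StrongEdge, DeltaEdge, h, true_and, not_lt]

variable [Fintype V]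

lemma StrongEdge.deleteEdge (h : X.StrongEdge x y) (hne : s(x, y) ≠ s(a, b)) :
    (X.deleteEdge a b).StrongEdge x y := by
  rw [StrongEdge, X.deleteEdge_υ_of_ne hne]
  exact ⟨h.1, (conn_mono _ (X.deleteEdge_υ_mono (X.deleteEdge_υ_le a b) x y) x y).trans h.2⟩

lemma DeltaEdge.symm (h : X.DeltaEdge a b) : X.DeltaEdge b a := by
  rwa [DeltaEdge, X.symm, deleteEdge_comm, conn_comm]

lemma DeltaEdge.not_strongEdge_of_sym2_eq (h : X.DeltaEdge a b) (he : s(x, y) = s(a, b)) :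
    ¬ X.StrongEdge x y := by
  rcases Sym2.eq_iff.1 he with ⟨rfl, rfl⟩ | ⟨rfl, rfl⟩
  exacts [h.not_strongEdge, h.symm.not_strongEdge]

/-- If `xy` is a δ-edge, a strongest `x`–`y` path avoiding `xy` may pass through `ab`; it can
then be rerouted through an `a`–`b` path of strength `> υ(ab)`, all of whose edges are too
strong to be `xy`. -/
lemma DeltaEdge.deleteEdge (hab : X.DeltaEdge a b) (hxy : X.DeltaEdge x y)
    (hne : s(x, y) ≠ s(a, b)) : (X.deleteEdge a b).DeltaEdge x y := by
  set c := (X.deleteEdge x y).conn x y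
  have hc : 0 < c := hxy.1.trans hxy.2
  obtain ⟨hxy_ne, hr⟩ := ((X.deleteEdge x y).le_conn_iff hc).1 le_rfl
  rw [DeltaEdge, X.deleteEdge_υ_of_ne hne]
  refine ⟨hxy.1, hxy.2.trans_le ((((X.deleteEdge a b).deleteEdge x y).le_conn_iff hc).2
    ⟨hxy_ne, ?_⟩)⟩
  have hcut : ((X.deleteEdge a b).deleteEdge x y).cut c =
      ((X.deleteEdge x y).cut c).deleteEdges {s(a, b)} := by
    simp only [cut_deleteEdge, SimpleGraph.deleteEdges_deleteEdges, Set.union_comm]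
  rw [hcut]
  refine hr.deleteEdges_of_not_isBridge fun hadj => ?_
  rw [SimpleGraph.isBridge_iff, not_not, ← hcut]
  have hcab : c ≤ X.υ a b := by
    rw [cut_deleteEdge] at hadj
    exact (SimpleGraph.deleteEdges_adj.1 hadj).1.1
  set t := (X.deleteEdge a b).conn a b
  have hct : c ≤ t := hcab.trans hab.2.le
  have hxyt : (X.deleteEdge a b).υ x y < t := by
    rw [X.deleteEdge_υ_of_ne hne]
    exact hxy.2.trans_le hct
  exact (((X.deleteEdge a b).le_conn_iff (hc.trans_le hct)).1 le_rfl).2.mono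
    ((X.deleteEdge a b).cut_le_cut_deleteEdge hct hxyt)

lemma DeltaEdge.strongEdge_deleteEdge_iff (hab : X.DeltaEdge a b) :
    (X.deleteEdge a b).StrongEdge x y ↔ X.StrongEdge x y := by
  by_cases he : s(x, y) = s(a, b)
  · refine iff_of_false (fun h => ?_) (hab.not_strongEdge_of_sym2_eq he)
    simpa [deleteEdge_υ, he] using h.1
  · refine ⟨fun h => ?_, fun h => h.deleteEdge he⟩
    have hpos : 0 < X.υ x y := by simpa only [X.deleteEdge_υ_of_ne he] using h.1
    rw [strongEdge_iff_not_deltaEdge hpos]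
    exact fun hxy => (strongEdge_iff_not_deltaEdge h.1).1 h (hab.deleteEdge hxy he)

lemma DeltaEdge.SDI_deleteEdge (hab : X.DeltaEdge a b) : (X.deleteEdge a b).SDI = X.SDI :=
  SDI_congr (fun _ _ => hab.strongEdge_deleteEdge_iff) fun _ _ h =>
    X.deleteEdge_υ_of_ne fun he => hab.not_strongEdge_of_sym2_eq he h

lemma IsFuzzyTree.exists_deltaEdge (hX : X.IsFuzzyTree) (hnt : ¬ X.support.IsTree) :
    ∃ a b, X.DeltaEdge a b := by
  obtain ⟨F, -, hF, hFtree, hFconn⟩ := hX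
  obtain ⟨a, b, hab, hFab⟩ : ∃ a b, 0 < X.υ a b ∧ F.υ a b = 0 := by
    by_contra! h
    have hsupp : F.support = X.support := by
      ext u v
      show 0 < F.υ u v ↔ 0 < X.υ u v
      rcases hF u v with h' | h'
      · rw [h']
      · exact iff_of_false (by simp [h']) fun hX => h u v hX h'
    exact hnt (hsupp ▸ hFtree)
  refine ⟨a, b, hab, (hFconn a b hab hFab).trans_le (conn_mono _ (fun u v => ?_) a b)⟩
  by_cases he : s(u, v) = s(a, b)
  · have hFuv : F.υ u v = 0 := by
      rcases Sym2.eq_iff.1 he with ⟨rfl, rfl⟩ | ⟨rfl, rfl⟩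
      exacts [hFab, (F.symm u v).trans hFab]
    exact hFuv ▸ (X.deleteEdge a b).υ_nonneg u v
  · rw [X.deleteEdge_υ_of_ne he]
    rcases hF u v with h' | h'
    · exact h'.le
    · exact h' ▸ X.υ_nonneg u v

end FuzzyGraph

/-- If X is a fuzzy tree whose underlying graph is not a tree,
then some edge uv satisfies SDI(X \ uv) = SDI(X). -/
theorem FuzzyGraph.exists_deleteEdge_SDI_eq {V : Type*} [Fintype V] [DecidableEq V]
    (X : FuzzyGraph V) (hX : X.IsFuzzyTree) (hnt : ¬ X.support.IsTree) :
    ∃ u v : V, 0 < X.υ u v ∧ (X.deleteEdge u v).SDI = X.SDI := by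
  obtain ⟨a, b, hab⟩ := hX.exists_deltaEdge hnt
  exact ⟨a, b, hab.1, hab.SDI_deleteEdge⟩
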